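/- arXiv:2509.21418 — 2 statements merged into one kernel-verified Lean document; each statement's English description precedes it below -/
import Mathlib

section
/- Let 𝔰 be an N-dimensional complex solvable Lie algebra with ordered basis (x₁, …, x_N), and let 𝔫 ⊆ 𝔰 be a nilpotent Lie ideal with [𝔰,𝔰] ⊆ 𝔫. Since every weight α ∈ Δ vanishes on 𝔫, each α induces a linear functional ᾱ on the quotient 𝔰/𝔫. If the induced functionals {ᾱ : α ∈ Δ} span the dual space (𝔰/𝔫)*, then k(𝔰) ≥ dim 𝔰 − dim 𝔫. -/
/-- The characteristic polynomial `Q_L(z₀, …, z_N) = det (z₀ I + z₁ ad x₁ + ⋯ + z_N ad x_N)`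
of an `N`-dimensional complex Lie algebra with ordered basis `(x₁, …, x_N)`; the variable of
index `0` is `z₀` and the variable of index `k.succ` is attached to the basis vector `x_k`. -/
noncomputable def lieCharPoly (N : ℕ) (L : Type) [LieRing L] [LieAlgebra ℂ L]
    (b : Module.Basis (Fin N) ℂ L) : MvPolynomial (Fin (N + 1)) ℂ :=
  Matrix.det
    ((MvPolynomial.X 0 : MvPolynomial (Fin (N + 1)) ℂ) •
        (1 : Matrix (Fin N) (Fin N) (MvPolynomial (Fin (N + 1)) ℂ)) +
      ∑ k : Fin N,
        (MvPolynomial.X k.succ : MvPolynomial (Fin (N + 1)) ℂ) •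
          ((LinearMap.toMatrix b b (LieAlgebra.ad ℂ L (b k))).map (MvPolynomial.C)))

/-- `k(Q)`: the number of distinct irreducible factors of `Q` up to scalar multiples, i.e. the
cardinality of the set of associate classes of irreducible polynomials dividing `Q`. -/
noncomputable def numIrreducibleFactors {σ : Type} (Q : MvPolynomial σ ℂ) : ℕ :=
  {a : Associates (MvPolynomial σ ℂ) | Irreducible a ∧ a ∣ Associates.mk Q}.ncard

/-- The weight space `V_α ⊆ 𝔫` of a linear functional `α : 𝔰 → ℂ`: the set of `v ∈ 𝔫` lying,
for every `x ∈ 𝔰`, in the generalized eigenspace of `(ad x)|_𝔫` for the eigenvalue `α x`. -/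
noncomputable def lieWeightSpace (𝔰 : Type) [LieRing 𝔰] [LieAlgebra ℂ 𝔰]
    (𝔫 : LieIdeal ℂ 𝔰) (α : Module.Dual ℂ 𝔰) : Submodule ℂ ↥𝔫 :=
  ⨅ x : 𝔰, Module.End.maxGenEigenspace (LieModule.toEnd ℂ 𝔰 ↥𝔫 x) (α x)

/-- The set of weights `Δ`: linear functionals with nonzero weight space. -/
noncomputable def lieWeightSet (𝔰 : Type) [LieRing 𝔰] [LieAlgebra ℂ 𝔰]
    (𝔫 : LieIdeal ℂ 𝔰) : Set (Module.Dual ℂ 𝔰) :=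
  {α | lieWeightSpace 𝔰 𝔫 α ≠ ⊥}

/-! If `α` is a weight, then `α x` is an eigenvalue of `ad x` for every `x`, so
`det (z₀ + ad x)` vanishes on the hyperplane `z₀ = -α x`; hence the linear form
`z₀ + ∑ α (x_k) z_k` divides `Q_𝔰`. These linear forms are irreducible, and they are pairwise
non-associate for distinct induced functionals `ᾱ`. Since the `ᾱ` span `(𝔰/𝔫)*`, there are at
least `dim (𝔰/𝔫)` of them. -/

open MvPolynomial

section LinearFactor

variable {R : Type*} [CommRing R] {N : ℕ}

noncomputable def linearFactor (c : Fin N → R) : MvPolynomial (Fin (N + 1)) R :=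
  X 0 + ∑ k, C (c k) * X k.succ

lemma finSuccEquiv_linearFactor (c : Fin N → R) :
    finSuccEquiv R N (linearFactor c) = Polynomial.X - Polynomial.C (-∑ k, C (c k) * X k) := by
  simp [linearFactor, finSuccEquiv_apply]

lemma eq_of_associated_linearFactor {c d : Fin N → R}
    (h : Associated (linearFactor c) (linearFactor d)) : c = d := by
  have h' := h.map (finSuccEquiv R N)
  rw [finSuccEquiv_linearFactor, finSuccEquiv_linearFactor] at h'
  have hsum : ∑ k, C (c k) * X k = (∑ k, C (d k) * X k : MvPolynomial (Fin N) R) := by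
    simpa using Polynomial.C_injective (sub_right_injective
      (Polynomial.eq_of_monic_of_associated (Polynomial.monic_X_sub_C _)
        (Polynomial.monic_X_sub_C _) h'))
  funext j
  simpa [Pi.single_apply] using congrArg (eval (Pi.single j 1)) hsum

variable [IsDomain R]

lemma irreducible_linearFactor (c : Fin N → R) : Irreducible (linearFactor c) := by
  rw [← MulEquiv.irreducible_iff (finSuccEquiv R N), finSuccEquiv_linearFactor]
  exact Polynomial.irreducible_X_sub_C _

lemma linearFactor_dvd_of_eval_eq_zero [Infinite R] {c : Fin N → R}
    {p : MvPolynomial (Fin (N + 1)) R}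
    (hp : ∀ z : Fin N → R, eval (Fin.cons (-∑ k, c k * z k) z) p = 0) :
    linearFactor c ∣ p := by
  rw [← map_dvd_iff (finSuccEquiv R N), finSuccEquiv_linearFactor, Polynomial.dvd_iff_isRoot]
  refine MvPolynomial.funext fun z => ?_
  simpa [eval_eq_eval_mv_eval', Polynomial.eval_map, ← Polynomial.eval₂_hom, mul_comm] using hp z

end LinearFactor

theorem Associates.finite_setOf_dvd {α : Type*} [CommMonoidWithZero α]
    [UniqueFactorizationMonoid α] {a : α} (ha : a ≠ 0) :
    {b : Associates α | b ∣ Associates.mk a}.Finite :=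
  @Finite.of_fintype _ (UniqueFactorizationMonoid.fintypeSubtypeDvd _ (by simpa using ha))

lemma Module.finrank_le_ncard_of_span_eq_top {K V : Type*} [DivisionRing K] [AddCommGroup V]
    [Module K V] {s : Set V} (hs : s.Finite) (hspan : Submodule.span K s = ⊤) :
    Module.finrank K V ≤ s.ncard := by
  have := hs.fintype
  rw [← finrank_top K V, ← hspan, Set.ncard_eq_toFinset_card']
  exact finrank_span_le_card s

lemma eval_lieCharPoly {N : ℕ} {L : Type} [LieRing L] [LieAlgebra ℂ L]
    (b : Module.Basis (Fin N) ℂ L) (t : ℂ) (z : Fin N → ℂ) :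
    eval (Fin.cons t z) (lieCharPoly N L b) =
      LinearMap.det (t • 1 + LieAlgebra.ad ℂ L (∑ k, z k • b k)) := by
  rw [lieCharPoly, RingHom.map_det, ← LinearMap.det_toMatrix b]
  congr 1
  ext i j
  simp [Matrix.sum_apply, Matrix.one_apply, LinearMap.toMatrix_one, apply_ite (eval _)]

lemma lieCharPoly_ne_zero {N : ℕ} {L : Type} [LieRing L] [LieAlgebra ℂ L]
    (b : Module.Basis (Fin N) ℂ L) : lieCharPoly N L b ≠ 0 := fun h => by
  simpa using congrArg (eval (Fin.cons 1 0)) h |>.symm.trans (eval_lieCharPoly b 1 0)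

lemma hasEigenvalue_ad_of_mem_lieWeightSet {𝔰 : Type} [LieRing 𝔰] [LieAlgebra ℂ 𝔰]
    {𝔫 : LieIdeal ℂ 𝔰} {α : Module.Dual ℂ 𝔰} (hα : α ∈ lieWeightSet 𝔰 𝔫) (x : 𝔰) :
    (LieAlgebra.ad ℂ 𝔰 x).HasEigenvalue (α x) := by
  have hgen : (LieModule.toEnd ℂ 𝔰 𝔫 x).HasUnifEigenvalue (α x) ⊤ :=
    ne_bot_of_le_ne_bot hα (iInf_le _ x)
  have hμ : (LieModule.toEnd ℂ 𝔰 𝔫 x).HasEigenvalue (α x) := hgen.lt zero_lt_one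
  obtain ⟨v, hv, hv0⟩ := hμ.exists_hasEigenvector
  refine Module.End.hasEigenvalue_of_hasEigenvector (x := (v : 𝔰)) ⟨?_, by simpa using hv0⟩
  rw [Module.End.mem_eigenspace_iff] at hv ⊢
  simpa using congrArg Subtype.val hv

lemma linearFactor_dvd_lieCharPoly {N : ℕ} {𝔰 : Type} [LieRing 𝔰] [LieAlgebra ℂ 𝔰]
    (b : Module.Basis (Fin N) ℂ 𝔰) {𝔫 : LieIdeal ℂ 𝔰} {α : Module.Dual ℂ 𝔰}
    (hα : α ∈ lieWeightSet 𝔰 𝔫) :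
    linearFactor (fun k => α (b k)) ∣ lieCharPoly N 𝔰 b := by
  have := Module.Free.of_basis b
  have := Module.Finite.of_basis b
  refine linearFactor_dvd_of_eval_eq_zero fun z => ?_
  have hα_sum : ∑ k, α (b k) * z k = α (∑ k, z k • b k) := by simp [mul_comm]
  rw [eval_lieCharPoly, hα_sum, neg_smul, add_comm, ← sub_eq_add_neg,
    LinearMap.det_eq_zero_iff_ker_ne_bot, ← Module.End.eigenspace_def]
  exact Module.End.hasEigenvalue_iff.mp (hasEigenvalue_ad_of_mem_lieWeightSet hα _)

theorem numIrreducibleFactors_ge_codim_of_weights_span_general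
    (N : ℕ) (𝔰 : Type) [LieRing 𝔰] [LieAlgebra ℂ 𝔰]
    (b : Module.Basis (Fin N) ℂ 𝔰)
    (𝔫 : LieIdeal ℂ 𝔰)
    (hspan : Submodule.span ℂ
        {φ : Module.Dual ℂ (𝔰 ⧸ 𝔫) | ∃ α ∈ lieWeightSet 𝔰 𝔫,
          ∀ x : 𝔰, α x = φ (LieSubmodule.Quotient.mk' 𝔫 x)} = ⊤) :
    numIrreducibleFactors (lieCharPoly N 𝔰 b) ≥
      Module.finrank ℂ 𝔰 - Module.finrank ℂ ↥𝔫 := by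
  have := Module.Finite.of_basis b
  set π : 𝔰 →ₗ[ℂ] 𝔰 ⧸ 𝔫 := (LieSubmodule.Quotient.mk' 𝔫).toLinearMap
  set W := {φ : Module.Dual ℂ (𝔰 ⧸ 𝔫) | ∃ α ∈ lieWeightSet 𝔰 𝔫, ∀ x : 𝔰, α x = φ (π x)}
  set T := {a | Irreducible a ∧ a ∣ Associates.mk (lieCharPoly N 𝔰 b)}
  let factor (φ : Module.Dual ℂ (𝔰 ⧸ 𝔫)) := Associates.mk (linearFactor fun k => φ (π (b k)))
  have factor_injective : factor.Injective := fun φ ψ h => by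
    have hcoeff := eq_of_associated_linearFactor (Associates.mk_eq_mk_iff_associated.mp h)
    have hπ : φ ∘ₗ π = ψ ∘ₗ π := b.ext (congrFun hcoeff)
    exact LinearMap.ext fun y => by
      obtain ⟨x, rfl⟩ := LieSubmodule.Quotient.surjective_mk' 𝔫 y
      exact LinearMap.congr_fun hπ x
  have factor_mem : ∀ φ ∈ W, factor φ ∈ T := by
    rintro φ ⟨α, hα, hαφ⟩
    have hcoeff : (fun k => φ (π (b k))) = fun k => α (b k) := funext fun k => (hαφ _).symm
    exact ⟨Associates.irreducible_mk.mpr (irreducible_linearFactor _),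
      Associates.mk_dvd_mk.mpr (hcoeff ▸ linearFactor_dvd_lieCharPoly b hα)⟩
  have hT : T.Finite :=
    (Associates.finite_setOf_dvd (lieCharPoly_ne_zero b)).subset fun _ ha => ha.2
  have hW : W.Finite :=
    (hT.subset (Set.image_subset_iff.mpr factor_mem)).of_finite_image factor_injective.injOn
  calc Module.finrank ℂ 𝔰 - Module.finrank ℂ 𝔫
    _ = Module.finrank ℂ (𝔰 ⧸ 𝔫) :=
      Nat.sub_eq_of_eq_add (Submodule.finrank_quotient_add_finrank 𝔫.toSubmodule).symm
    _ = Module.finrank ℂ (Module.Dual ℂ (𝔰 ⧸ 𝔫)) := Subspace.dual_finrank_eq.symm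
    _ ≤ W.ncard := Module.finrank_le_ncard_of_span_eq_top hW hspan
    _ ≤ T.ncard := Set.ncard_le_ncard_of_injOn factor factor_mem factor_injective.injOn hT

/-- Let `𝔰` be an `N`-dimensional complex solvable Lie algebra with ordered
basis, and `𝔫 ⊆ 𝔰` a nilpotent Lie ideal with `[𝔰,𝔰] ⊆ 𝔫`.  Every weight `α ∈ Δ` vanishes on
`𝔫`, so it induces a functional `ᾱ` on `𝔰 ⧸ 𝔫`.  If the induced functionals span the dual of
`𝔰 ⧸ 𝔫`, then `k(𝔰) ≥ dim 𝔰 − dim 𝔫`. -/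
theorem numIrreducibleFactors_ge_codim_of_weights_span
    (N : ℕ) (𝔰 : Type) [LieRing 𝔰] [LieAlgebra ℂ 𝔰] [LieAlgebra.IsSolvable 𝔰]
    (b : Module.Basis (Fin N) ℂ 𝔰)
    (𝔫 : LieIdeal ℂ 𝔰) (hnil : LieRing.IsNilpotent ↥𝔫)
    (hder : ∀ x y : 𝔰, ⁅x, y⁆ ∈ 𝔫)
    (hspan : Submodule.span ℂ
        {φ : Module.Dual ℂ (𝔰 ⧸ 𝔫) | ∃ α ∈ lieWeightSet 𝔰 𝔫,
          ∀ x : 𝔰, α x = φ (LieSubmodule.Quotient.mk' 𝔫 x)} = ⊤) :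
    numIrreducibleFactors (lieCharPoly N 𝔰 b) ≥
      Module.finrank ℂ 𝔰 - Module.finrank ℂ ↥𝔫 :=
  numIrreducibleFactors_ge_codim_of_weights_span_general N 𝔰 b 𝔫 hspan
end

section
/- Let 𝔰 be a solvable complex Lie algebra in the canonical form for a Heisenberg nilradical 𝔥(m) with f-dimensional extension. Then k(𝔰) ≤ 2m + 2, i.e., the number of distinct irreducible factors (up to scalar multiples) of the characteristic polynomial Q_𝔰 is at most 2m + 2. -/
/-- The index of the central element `h` in the canonical basis
`(h, p₁, …, p_m, q₁, …, q_m, f₁, …, f_f)`. -/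
def idxH (m f : ℕ) : Fin (2 * m + 1 + f) := ⟨0, by omega⟩

/-- The index of `p_i` in the canonical basis. -/
def idxP (m f : ℕ) (i : Fin m) : Fin (2 * m + 1 + f) := ⟨1 + i.val, by have := i.isLt; omega⟩

/-- The index of `q_i` in the canonical basis. -/
def idxQ (m f : ℕ) (i : Fin m) : Fin (2 * m + 1 + f) :=
  ⟨1 + m + i.val, by have := i.isLt; omega⟩

/-- The index of `ξ_i` in the canonical basis, where `ξ = (p₁, …, p_m, q₁, …, q_m)`. -/
def idxXi (m f : ℕ) (i : Fin (2 * m)) : Fin (2 * m + 1 + f) :=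
  ⟨1 + i.val, by have := i.isLt; omega⟩

/-- The index of the extension element `f_α` in the canonical basis. -/
def idxF (m f : ℕ) (α : Fin f) : Fin (2 * m + 1 + f) :=
  ⟨2 * m + 1 + α.val, by have := α.isLt; omega⟩

/-- The canonical symplectic structure matrix `J` on `ℂ^{2m}` (with respect to the ordering
`(p₁, …, p_m, q₁, …, q_m)`), so that `𝔰𝔭(2m, ℂ) = {X | Xᵀ J + J X = 0}`. -/
def symplJ (m : ℕ) : Matrix (Fin (2 * m)) (Fin (2 * m)) ℂ :=
  Matrix.of fun i j =>
    if i.val < m ∧ j.val = i.val + m then 1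
    else if j.val < m ∧ i.val = j.val + m then -1 else 0

open MvPolynomial UniqueFactorizationMonoid

section IrreducibleFactors

variable {σ : Type}

lemma setOf_irreducible_dvd_subset_image_factors {Q : MvPolynomial σ ℂ} (hQ : Q ≠ 0) :
    {a : Associates (MvPolynomial σ ℂ) | Irreducible a ∧ a ∣ Associates.mk Q} ⊆
      Associates.mk '' {y | y ∈ factors Q} := by
  rintro x ⟨hirr, hdvd⟩
  obtain ⟨y, rfl⟩ := Associates.mk_surjective x
  rw [Associates.irreducible_mk] at hirr
  rw [Associates.mk_dvd_mk] at hdvd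
  obtain ⟨q, hq, hyq⟩ := exists_mem_factors_of_dvd hQ hirr hdvd
  exact ⟨q, hq, (Associates.mk_eq_mk_iff_associated.mpr hyq).symm⟩

lemma numIrreducibleFactors_le_card_factors {Q : MvPolynomial σ ℂ} (hQ : Q ≠ 0) :
    numIrreducibleFactors Q ≤ Multiset.card (factors Q) := by
  classical
  calc numIrreducibleFactors Q ≤ (Associates.mk '' {y | y ∈ factors Q}).ncard :=
        Set.ncard_le_ncard (setOf_irreducible_dvd_subset_image_factors hQ)
          ((factors Q).finite_toSet.image _)
    _ ≤ {y | y ∈ factors Q}.ncard := Set.ncard_image_le (factors Q).finite_toSet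
    _ = (factors Q).toFinset.card := by
        rw [← Set.ncard_coe_finset]
        congr 1
        ext
        simp
    _ ≤ Multiset.card (factors Q) := Multiset.toFinset_card_le _

lemma finite_setOf_irreducible_dvd {Q : MvPolynomial σ ℂ} (hQ : Q ≠ 0) :
    {a : Associates (MvPolynomial σ ℂ) | Irreducible a ∧ a ∣ Associates.mk Q}.Finite :=
  ((factors Q).finite_toSet.image _).subset (setOf_irreducible_dvd_subset_image_factors hQ)

lemma numIrreducibleFactors_mul_le {p q : MvPolynomial σ ℂ} (hp : p ≠ 0) (hq : q ≠ 0) :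
    numIrreducibleFactors (p * q) ≤ numIrreducibleFactors p + numIrreducibleFactors q := by
  refine (Set.ncard_le_ncard ?_ ((finite_setOf_irreducible_dvd hp).union
    (finite_setOf_irreducible_dvd hq))).trans (Set.ncard_union_le _ _)
  rintro x ⟨hirr, hdvd⟩
  rw [← Associates.mk_mul_mk] at hdvd
  exact (hirr.prime.dvd_or_dvd hdvd).imp (⟨hirr, ·⟩) (⟨hirr, ·⟩)

lemma numIrreducibleFactors_pow_le_one {p : MvPolynomial σ ℂ} (hp : Prime p) (n : ℕ) :
    numIrreducibleFactors (p ^ n) ≤ 1 := by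
  refine (Set.ncard_le_ncard (t := {Associates.mk p}) ?_).trans (Set.ncard_singleton _).le
  rintro x ⟨hirr, hdvd⟩
  rw [Associates.mk_pow] at hdvd
  have hp' : Irreducible (Associates.mk p) := Associates.irreducible_mk.mpr hp.irreducible
  exact associated_iff_eq.mp (hirr.associated_of_dvd hp' (hirr.prime.dvd_of_dvd_pow hdvd))

end IrreducibleFactors

lemma Polynomial.Monic.card_le_natDegree_of_prod_dvd {R : Type*} [CommRing R] [IsDomain R]
    {p : Polynomial R} (hp : p.Monic) {s : Multiset (Polynomial R)} (hs : ∀ q ∈ s, ¬IsUnit q)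
    (hdvd : s.prod ∣ p) : Multiset.card s ≤ p.natDegree := by
  have hs0 : (0 : Polynomial R) ∉ s := fun h0 =>
    hp.ne_zero (zero_dvd_iff.mp ((Multiset.dvd_prod h0).trans hdvd))
  calc Multiset.card s = Multiset.card s • 1 := (smul_eq_mul _ _).trans (mul_one _) |>.symm
    _ ≤ (s.map Polynomial.natDegree).sum := by
        rw [← Multiset.card_map Polynomial.natDegree s]
        refine Multiset.card_nsmul_le_sum fun d hd => ?_
        obtain ⟨q, hq, rfl⟩ := Multiset.mem_map.mp hd
        exact Polynomial.natDegree_pos_of_not_isUnit_of_dvd_monic hp (hs q hq)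
          ((Multiset.dvd_prod hq).trans hdvd)
    _ = s.prod.natDegree := (Polynomial.natDegree_multiset_prod s hs0).symm
    _ ≤ p.natDegree := Polynomial.natDegree_le_of_dvd hdvd hp.ne_zero

lemma numIrreducibleFactors_le_natDegree_of_monic {n : ℕ} {g : MvPolynomial (Fin (n + 1)) ℂ}
    (hg : (finSuccEquiv ℂ n g).Monic) :
    numIrreducibleFactors g ≤ (finSuccEquiv ℂ n g).natDegree := by
  have hg0 : g ≠ 0 := by
    rintro rfl
    exact hg.ne_zero (map_zero _)
  refine (numIrreducibleFactors_le_card_factors hg0).trans ?_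
  rw [← Multiset.card_map (finSuccEquiv ℂ n)]
  refine hg.card_le_natDegree_of_prod_dvd (fun q hq => ?_) ?_
  · obtain ⟨y, hy, rfl⟩ := Multiset.mem_map.mp hq
    exact (MulEquiv.isUnit_map (finSuccEquiv ℂ n).toMulEquiv).not.mpr
      (irreducible_of_factor y hy).not_isUnit
  · rw [← map_multiset_prod]
    exact map_dvd _ (factors_prod hg0).dvd

section LinearPencil

variable {ι : Type*} [Fintype ι] [DecidableEq ι] {N : ℕ}

noncomputable def linearPencil (A : Fin N → Matrix ι ι ℂ) :
    Matrix ι ι (MvPolynomial (Fin (N + 1)) ℂ) :=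
  (X 0 : MvPolynomial (Fin (N + 1)) ℂ) • 1 +
    ∑ k, (X k.succ : MvPolynomial (Fin (N + 1)) ℂ) • (A k).map C

omit [Fintype ι] in
lemma linearPencil_apply (A : Fin N → Matrix ι ι ℂ) (i j : ι) :
    linearPencil A i j = X 0 * (1 : Matrix ι ι (MvPolynomial (Fin (N + 1)) ℂ)) i j +
      ∑ k, X k.succ * C (A k i j) := by
  simp [linearPencil, Matrix.sum_apply]

lemma finSuccEquiv_det_linearPencil (A : Fin N → Matrix ι ι ℂ) :
    finSuccEquiv ℂ N (linearPencil A).det =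
      (-∑ k, (X k : MvPolynomial (Fin N) ℂ) • (A k).map C).charpoly := by
  rw [Matrix.charpoly, ← AlgEquiv.coe_toAlgHom, AlgHom.map_det]
  have hC (c : ℂ) : finSuccEquiv ℂ N (C c) = Polynomial.C (C c) := (finSuccEquiv ℂ N).commutes c
  congr 1
  refine Matrix.ext fun i j => ?_
  by_cases hij : i = j <;>
    simp [hij, hC, linearPencil_apply, Matrix.sum_apply, finSuccEquiv_X_zero, finSuccEquiv_X_succ,
      Polynomial.C_mul]

omit [Fintype ι] in
lemma linearPencil_toSquareBlockProp (A : Fin N → Matrix ι ι ℂ) (p : ι → Prop)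
    [DecidablePred p] :
    linearPencil (fun k => (A k).toSquareBlockProp p) = (linearPencil A).toSquareBlockProp p := by
  refine Matrix.ext fun i j => ?_
  simp [Matrix.toSquareBlockProp_def, linearPencil_apply, Matrix.one_apply, Subtype.ext_iff]

lemma det_linearPencil_of_apply_eq_zero (A : Fin N → Matrix ι ι ℂ) (p : ι → Prop)
    [DecidablePred p] (hA : ∀ k i j, ¬p i → A k i j = 0) :
    (linearPencil A).det = (linearPencil fun k => (A k).toSquareBlockProp p).det *
      X 0 ^ Fintype.card {i // ¬p i} := by
  have hcompl :
      (linearPencil A).toSquareBlockProp (¬p ·) = (X 0 : MvPolynomial (Fin (N + 1)) ℂ) • 1 := by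
    refine Matrix.ext fun i j => ?_
    simp [Matrix.toSquareBlockProp_def, linearPencil_apply, hA _ _ _ i.2, Matrix.one_apply,
      Subtype.ext_iff]
  rw [Matrix.twoBlockTriangular_det _ p, linearPencil_toSquareBlockProp, hcompl,
    Matrix.det_smul, Matrix.det_one, mul_one]
  intro i hi j hj
  have hij : i ≠ j := fun h => hi (h ▸ hj)
  simp [linearPencil_apply, hA _ _ _ hi, hij]

lemma numIrreducibleFactors_det_linearPencil_le (A : Fin N → Matrix ι ι ℂ) (p : ι → Prop)
    [DecidablePred p] (hA : ∀ k i j, ¬p i → A k i j = 0) :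
    numIrreducibleFactors (linearPencil A).det ≤ Fintype.card {i // p i} + 1 := by
  set g := (linearPencil fun k => (A k).toSquareBlockProp p).det
  have hg : (finSuccEquiv ℂ N g).Monic := by
    rw [finSuccEquiv_det_linearPencil]
    exact Matrix.charpoly_monic _
  have hg0 : g ≠ 0 := fun h => hg.ne_zero (by rw [h, map_zero])
  rw [det_linearPencil_of_apply_eq_zero A p hA]
  calc numIrreducibleFactors (g * X 0 ^ Fintype.card {i // ¬p i})
      ≤ numIrreducibleFactors g + numIrreducibleFactors (X 0 ^ Fintype.card {i // ¬p i} :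
          MvPolynomial (Fin (N + 1)) ℂ) :=
        numIrreducibleFactors_mul_le hg0 (pow_ne_zero _ (X_ne_zero _))
    _ ≤ (finSuccEquiv ℂ N g).natDegree + 1 :=
        add_le_add (numIrreducibleFactors_le_natDegree_of_monic hg)
          (numIrreducibleFactors_pow_le_one X_prime _)
    _ = Fintype.card {i // p i} + 1 := by
        rw [finSuccEquiv_det_linearPencil, Matrix.charpoly_natDegree_eq_dim]

end LinearPencil

theorem numIrreducibleFactors_lieCharPoly_le {N : ℕ} {L : Type} [LieRing L] [LieAlgebra ℂ L]
    (b : Module.Basis (Fin N) ℂ L) (p : Fin N → Prop) [DecidablePred p]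
    (hb : ∀ k j, ⁅b k, b j⁆ ∈ Submodule.span ℂ (b '' {i | p i})) :
    numIrreducibleFactors (lieCharPoly N L b) ≤ Fintype.card {i // p i} + 1 := by
  refine numIrreducibleFactors_det_linearPencil_le _ p fun k i j hi => ?_
  rw [LinearMap.toMatrix_apply, LieAlgebra.ad_apply]
  exact Finsupp.notMem_support_iff.mp fun hmem => hi (b.mem_span_image.mp (hb k j) hmem)

section CanonicalBasis

variable (m f : ℕ)

lemma eq_idxH_or_idxXi_or_idxF (i : Fin (2 * m + 1 + f)) :
    i = idxH m f ∨ (∃ x, i = idxXi m f x) ∨ ∃ α, i = idxF m f α := by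
  by_cases h0 : i.val = 0
  · exact Or.inl (by simp only [idxH, Fin.ext_iff]; omega)
  by_cases h1 : i.val < 2 * m + 1
  · exact Or.inr (Or.inl ⟨⟨i.val - 1, by omega⟩, by simp only [idxXi, Fin.ext_iff]; omega⟩)
  · exact Or.inr (Or.inr ⟨⟨i.val - (2 * m + 1), by omega⟩, by simp only [idxF, Fin.ext_iff]; omega⟩)

lemma idxXi_eq_idxP_or_idxQ (x : Fin (2 * m)) :
    (∃ i, idxXi m f x = idxP m f i) ∨ ∃ i, idxXi m f x = idxQ m f i := by
  by_cases h : x.val < m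
  · exact Or.inl ⟨⟨x.val, h⟩, by simp only [idxXi, idxP]⟩
  · exact Or.inr ⟨⟨x.val - m, by omega⟩, by simp only [idxXi, idxQ, Fin.ext_iff]; omega⟩

end CanonicalBasis

lemma lie_mem_span_nilradical (m f : ℕ) {𝔰 : Type} [LieRing 𝔰] [LieAlgebra ℂ 𝔰]
    (b : Module.Basis (Fin (2 * m + 1 + f)) ℂ 𝔰)
    {a : Fin f → ℂ} {X : Fin f → Matrix (Fin (2 * m)) (Fin (2 * m)) ℂ} {r : Fin f → Fin f → ℂ}
    (hpq : ∀ i j : Fin m,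
      ⁅b (idxP m f i), b (idxQ m f j)⁆ = if i = j then b (idxH m f) else 0)
    (hpp : ∀ i j : Fin m, ⁅b (idxP m f i), b (idxP m f j)⁆ = 0)
    (hqq : ∀ i j : Fin m, ⁅b (idxQ m f i), b (idxQ m f j)⁆ = 0)
    (hhp : ∀ i : Fin m, ⁅b (idxH m f), b (idxP m f i)⁆ = 0)
    (hhq : ∀ i : Fin m, ⁅b (idxH m f), b (idxQ m f i)⁆ = 0)
    (hfh : ∀ α : Fin f, ⁅b (idxF m f α), b (idxH m f)⁆ = (2 * a α) • b (idxH m f))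
    (hfxi : ∀ (α : Fin f) (i : Fin (2 * m)),
      ⁅b (idxF m f α), b (idxXi m f i)⁆ =
        ∑ j : Fin (2 * m),
          ((a α • (1 : Matrix (Fin (2 * m)) (Fin (2 * m)) ℂ) + X α) j i) • b (idxXi m f j))
    (hff : ∀ α β : Fin f, ⁅b (idxF m f α), b (idxF m f β)⁆ = r α β • b (idxH m f))
    (k j : Fin (2 * m + 1 + f)) :
    ⁅b k, b j⁆ ∈ Submodule.span ℂ (b '' {i | i.val < 2 * m + 1}) := by
  set n := Submodule.span ℂ (b '' {i | i.val < 2 * m + 1})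
  have hH : b (idxH m f) ∈ n := Submodule.subset_span ⟨_, by simp [idxH], rfl⟩
  have hXi (x : Fin (2 * m)) : b (idxXi m f x) ∈ n :=
    Submodule.subset_span ⟨_, by simp [idxXi]; omega, rfl⟩
  have swap {y z : 𝔰} (h : ⁅y, z⁆ ∈ n) : ⁅z, y⁆ ∈ n := by
    rw [← lie_skew]
    exact n.neg_mem h
  have rowF (α : Fin f) (j : Fin (2 * m + 1 + f)) : ⁅b (idxF m f α), b j⁆ ∈ n := by
    rcases eq_idxH_or_idxXi_or_idxF m f j with rfl | ⟨y, rfl⟩ | ⟨β, rfl⟩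
    · exact hfh α ▸ n.smul_mem _ hH
    · exact hfxi α y ▸ n.sum_mem fun l _ => n.smul_mem _ (hXi l)
    · exact hff α β ▸ n.smul_mem _ hH
  have rowH (j : Fin (2 * m + 1 + f)) : ⁅b (idxH m f), b j⁆ ∈ n := by
    rcases eq_idxH_or_idxXi_or_idxF m f j with rfl | ⟨y, rfl⟩ | ⟨β, rfl⟩
    · exact lie_self (b (idxH m f)) ▸ n.zero_mem
    · rcases idxXi_eq_idxP_or_idxQ m f y with ⟨i, hy⟩ | ⟨i, hy⟩ <;> rw [hy]
      · exact hhp i ▸ n.zero_mem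
      · exact hhq i ▸ n.zero_mem
    · exact swap (rowF β _)
  have rowXi (x y : Fin (2 * m)) : ⁅b (idxXi m f x), b (idxXi m f y)⁆ ∈ n := by
    have hPQ (i i' : Fin m) : ⁅b (idxP m f i), b (idxQ m f i')⁆ ∈ n := by
      rw [hpq]
      split_ifs
      exacts [hH, n.zero_mem]
    rcases idxXi_eq_idxP_or_idxQ m f x with ⟨i, hx⟩ | ⟨i, hx⟩ <;>
      rcases idxXi_eq_idxP_or_idxQ m f y with ⟨i', hy⟩ | ⟨i', hy⟩ <;> rw [hx, hy]
    · exact hpp i i' ▸ n.zero_mem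
    · exact hPQ i i'
    · exact swap (hPQ i' i)
    · exact hqq i i' ▸ n.zero_mem
  rcases eq_idxH_or_idxXi_or_idxF m f k with rfl | ⟨x, rfl⟩ | ⟨α, rfl⟩
  · exact rowH j
  · rcases eq_idxH_or_idxXi_or_idxF m f j with rfl | ⟨y, rfl⟩ | ⟨β, rfl⟩
    · exact swap (rowH _)
    · exact rowXi x y
    · exact swap (rowF β _)
  · exact rowF α j

theorem heisenberg_k_le_two_m_add_two_general
    (m f : ℕ)
    (𝔰 : Type) [LieRing 𝔰] [LieAlgebra ℂ 𝔰]
    (b : Module.Basis (Fin (2 * m + 1 + f)) ℂ 𝔰)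
    (a : Fin f → ℂ) (X : Fin f → Matrix (Fin (2 * m)) (Fin (2 * m)) ℂ)
    (r : Fin f → Fin f → ℂ)
    (hpq : ∀ i j : Fin m,
      ⁅b (idxP m f i), b (idxQ m f j)⁆ = if i = j then b (idxH m f) else 0)
    (hpp : ∀ i j : Fin m, ⁅b (idxP m f i), b (idxP m f j)⁆ = 0)
    (hqq : ∀ i j : Fin m, ⁅b (idxQ m f i), b (idxQ m f j)⁆ = 0)
    (hhp : ∀ i : Fin m, ⁅b (idxH m f), b (idxP m f i)⁆ = 0)
    (hhq : ∀ i : Fin m, ⁅b (idxH m f), b (idxQ m f i)⁆ = 0)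
    (hfh : ∀ α : Fin f, ⁅b (idxF m f α), b (idxH m f)⁆ = (2 * a α) • b (idxH m f))
    (hfxi : ∀ (α : Fin f) (i : Fin (2 * m)),
      ⁅b (idxF m f α), b (idxXi m f i)⁆ =
        ∑ j : Fin (2 * m),
          ((a α • (1 : Matrix (Fin (2 * m)) (Fin (2 * m)) ℂ) + X α) j i) • b (idxXi m f j))
    (hff : ∀ α β : Fin f, ⁅b (idxF m f α), b (idxF m f β)⁆ = r α β • b (idxH m f)) :
    numIrreducibleFactors (lieCharPoly (2 * m + 1 + f) 𝔰 b) ≤ 2 * m + 2 := by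
  have hcard : Fintype.card {i : Fin (2 * m + 1 + f) // i.val < 2 * m + 1} = 2 * m + 1 := by
    rw [Fintype.card_subtype, Fin.card_filter_val_lt]
    omega
  calc numIrreducibleFactors (lieCharPoly (2 * m + 1 + f) 𝔰 b)
      ≤ Fintype.card {i : Fin (2 * m + 1 + f) // i.val < 2 * m + 1} + 1 :=
        numIrreducibleFactors_lieCharPoly_le b _ <|
          lie_mem_span_nilradical m f b hpq hpp hqq hhp hhq hfh hfxi hff
    _ = 2 * m + 2 := by rw [hcard]

/-- For a solvable complex Lie algebra `𝔰` in the canonical form for a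
Heisenberg nilradical `𝔥(m)` with `f`-dimensional extension, `k(𝔰) ≤ 2m + 2`: the number of
distinct irreducible factors (up to scalar multiples) of `Q_𝔰` is at most `2m + 2`. -/
theorem heisenberg_k_le_two_m_add_two
    (m f : ℕ) (hm : 1 ≤ m) (hf : 1 ≤ f)
    (𝔰 : Type) [LieRing 𝔰] [LieAlgebra ℂ 𝔰] [LieAlgebra.IsSolvable 𝔰]
    (b : Module.Basis (Fin (2 * m + 1 + f)) ℂ 𝔰)
    (a : Fin f → ℂ) (X : Fin f → Matrix (Fin (2 * m)) (Fin (2 * m)) ℂ)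
    (r : Fin f → Fin f → ℂ)
    (hpq : ∀ i j : Fin m,
      ⁅b (idxP m f i), b (idxQ m f j)⁆ = if i = j then b (idxH m f) else 0)
    (hpp : ∀ i j : Fin m, ⁅b (idxP m f i), b (idxP m f j)⁆ = 0)
    (hqq : ∀ i j : Fin m, ⁅b (idxQ m f i), b (idxQ m f j)⁆ = 0)
    (hhp : ∀ i : Fin m, ⁅b (idxH m f), b (idxP m f i)⁆ = 0)
    (hhq : ∀ i : Fin m, ⁅b (idxH m f), b (idxQ m f i)⁆ = 0)
    (hfh : ∀ α : Fin f, ⁅b (idxF m f α), b (idxH m f)⁆ = (2 * a α) • b (idxH m f))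
    (hfxi : ∀ (α : Fin f) (i : Fin (2 * m)),
      ⁅b (idxF m f α), b (idxXi m f i)⁆ =
        ∑ j : Fin (2 * m),
          ((a α • (1 : Matrix (Fin (2 * m)) (Fin (2 * m)) ℂ) + X α) j i) • b (idxXi m f j))
    (hff : ∀ α β : Fin f, ⁅b (idxF m f α), b (idxF m f β)⁆ = r α β • b (idxH m f))
    (hskew : ∀ α β : Fin f, r β α = - r α β)
    (hsp : ∀ α : Fin f, (X α).transpose * symplJ m + symplJ m * X α = 0)
    (hcomm : ∀ α β : Fin f, X α * X β = X β * X α) :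
    numIrreducibleFactors (lieCharPoly (2 * m + 1 + f) 𝔰 b) ≤ 2 * m + 2 :=
  heisenberg_k_le_two_m_add_two_general m f 𝔰 b a X r hpq hpp hqq hhp hhq hfh hfxi hff
end
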